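/- arXiv:2412.16903 — 7 statements merged into one kernel-verified Lean document; each statement's English description precedes it below -/
import Mathlib

section
/- Let R be a (nonunital) associative commutative ring with free Z-linear basis {x_s : s ≥ 1} (set x_0 = 0), such that each product x_m x_n is a nonnegative integer combination of the x_s for s > 0, and x_1 x_2 = 2 x_1. Suppose the Z-linear functional f : R → Z defined by f(x_s) = s satisfies f(x_s x_t) = 2·min(s,t) for all s,t. Then x_m x_n = 2 x_{min(m,n)} whenever m ≠ n. -/
/-!
Write a product `x m * x n` as a sum of basis vectors with multiplicities, i.e. as a multiset `T`
of indices. Then `f (x j * (x m * x n)) = 2 ∑_{s ∈ T} min j s`, so by associativity `T` is pinned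
down once the products `x j * x q` with `j < m` are known. For `m = 1`, `f (x 1 * x q) = 2` leaves
`x 1 * x q ∈ {2 x 1, x 2}`, and `x 1 * x 2 = 2 x 1` rules out `x 2`. For `m = k + 1`, testing with
`j = 1` and `j = k` leaves `x m * x q ∈ {2 x m, x k + x (k + 2)}` for `q ≥ m`; for `q > m` the
second option is excluded since `f` would take the values `4m - 2` on `x m * (x m * x q)` and `4m`
on `(x m * x m) * x q`.
-/

lemma Module.Basis.exists_multiset_eq_sum_map {ι M : Type*} [AddCommGroup M]
    (b : Module.Basis ι ℤ M) {y : M} (hy : ∀ i, 0 ≤ b.repr y i) :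
    ∃ S : Multiset ι, y = (S.map b).sum := by
  classical
  refine ⟨Finsupp.toMultiset ((b.repr y).mapRange Int.toNat rfl), ?_⟩
  rw [Finsupp.toMultiset_apply, ← Multiset.coe_mapAddMonoidHom, map_finsuppSum,
    ← Multiset.coe_sumAddMonoidHom, map_finsuppSum, Finsupp.sum_mapRange_index (by simp)]
  conv_lhs => rw [← b.linearCombination_repr y, Finsupp.linearCombination_apply]
  refine Finsupp.sum_congr fun i _ => ?_
  rw [map_nsmul, map_nsmul, Multiset.coe_mapAddMonoidHom, Multiset.coe_sumAddMonoidHom,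
    Multiset.map_singleton, Multiset.sum_singleton, ← natCast_zsmul,
    Int.toNat_of_nonneg (hy i)]

lemma Multiset.sum_map_min_one {T : Multiset ℕ} (hT : ∀ s ∈ T, 0 < s) :
    (T.map (min 1)).sum = card T := by
  rw [map_congr rfl fun s hs => min_eq_left (hT s hs), map_const', sum_replicate, smul_eq_mul,
    mul_one]

lemma Multiset.eq_of_sum_eq_two {T : Multiset ℕ} (hT : ∀ s ∈ T, 0 < s) (h : T.sum = 2) :
    T = {2} ∨ T = {1, 1} := by
  have hcard : card T ≤ 2 := by
    simpa [← h] using card_nsmul_le_sum (fun s hs => hT s hs)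
  interval_cases hc : card T
  · simp [card_eq_zero.mp hc] at h
  · obtain ⟨a, rfl⟩ := card_eq_one.mp hc
    rw [sum_singleton] at h
    exact .inl (h ▸ rfl)
  · obtain ⟨a, a', rfl⟩ := card_eq_two.mp hc
    simp only [insert_eq_cons, mem_cons, mem_singleton, forall_eq_or_imp, forall_eq, sum_cons,
      sum_singleton] at hT h
    right; congr <;> omega

lemma Multiset.eq_of_sum_map_min {T : Multiset ℕ} {k : ℕ} (hcard : card T = 2)
    (hsum : T.sum = 2 * (k + 1)) (hmin : (T.map (min k)).sum = 2 * k) :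
    T = {k + 1, k + 1} ∨ T = {k, k + 2} := by
  obtain ⟨a, a', rfl⟩ := card_eq_two.mp hcard
  simp only [insert_eq_cons, sum_cons, sum_singleton, map_cons, map_singleton] at hsum hmin
  rcases (by omega : (a = k + 1 ∧ a' = k + 1) ∨ (a = k ∧ a' = k + 2) ∨ (a = k + 2 ∧ a' = k))
    with ⟨rfl, rfl⟩ | ⟨rfl, rfl⟩ | ⟨rfl, rfl⟩
  · left; rfl
  · right; rfl
  · right; exact pair_comm _ _

structure IsBasevPair {R : Type*} [NonUnitalCommRing R] (x : ℕ → R) (f : R →ₗ[ℤ] ℤ) :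
    Prop where
  map_x : ∀ s : ℕ, 0 < s → f (x s) = s
  map_x_mul_x : ∀ s t : ℕ, 0 < s → 0 < t → f (x s * x t) = 2 * min s t
  exists_x_mul_x_eq_sum : ∀ m n : ℕ, 0 < m → 0 < n →
    ∃ T : Multiset ℕ, (∀ s ∈ T, 0 < s) ∧ x m * x n = (T.map x).sum

namespace IsBasevPair

variable {R : Type*} [NonUnitalCommRing R] {x : ℕ → R} {f : R →ₗ[ℤ] ℤ} (h : IsBasevPair x f)
include h

lemma map_sum {T : Multiset ℕ} (hT : ∀ s ∈ T, 0 < s) : f (T.map x).sum = T.sum := by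
  rw [map_multiset_sum, Multiset.map_map, Nat.cast_multiset_sum]
  exact congrArg Multiset.sum (Multiset.map_congr rfl fun s hs => h.map_x s (hT s hs))

lemma map_x_mul_sum {k : ℕ} (hk : 0 < k) {T : Multiset ℕ} (hT : ∀ s ∈ T, 0 < s) :
    f (x k * (T.map x).sum) = 2 * (T.map (min k)).sum := by
  rw [← Multiset.sum_map_mul_left, map_multiset_sum, Multiset.map_map, Nat.cast_multiset_sum,
    Multiset.map_map, ← Multiset.sum_map_mul_left]
  exact congrArg Multiset.sum (Multiset.map_congr rfl fun s hs => h.map_x_mul_x k s hk (hT s hs))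

lemma one_mul_eq_or {q : ℕ} (hq : 0 < q) : x 1 * x q = (2 : ℤ) • x 1 ∨ x 1 * x q = x 2 := by
  obtain ⟨T, hT, hTq⟩ := h.exists_x_mul_x_eq_sum 1 q one_pos hq
  have hsum : T.sum = 2 := by
    have := h.map_sum hT
    rw [← hTq, h.map_x_mul_x 1 q one_pos hq, min_eq_left hq] at this
    exact_mod_cast this.symm
  rcases Multiset.eq_of_sum_eq_two hT hsum with rfl | rfl
  · right; simpa using hTq
  · left; simpa [two_smul] using hTq

lemma one_mul_eq (hx12 : x 1 * x 2 = (2 : ℤ) • x 1) {q : ℕ} (hq : 1 < q) :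
    x 1 * x q = (2 : ℤ) • x 1 := by
  refine (h.one_mul_eq_or (by omega)).resolve_right fun h1q => ?_
  have hassoc : x 1 * x 1 * x q = (2 : ℤ) • x 1 := by rw [mul_assoc, h1q, hx12]
  rcases h.one_mul_eq_or one_pos with h11 | h11
  · rw [h11, smul_mul_assoc, h1q] at hassoc
    have := congrArg f hassoc
    simp [h.map_x] at this
  · rw [h11] at hassoc
    have := congrArg f hassoc
    rw [h.map_x_mul_x 2 q two_pos (by omega), map_zsmul, h.map_x 1 one_pos, smul_eq_mul] at this
    omega

lemma map_x_mul_mul_of_forall_lt {j m n : ℕ} (hj : 0 < j)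
    (hjx : ∀ q, j < q → x j * x q = (2 : ℤ) • x j) (hjm : j < m) (hjn : j < n) :
    f (x j * (x m * x n)) = 4 * j := by
  rw [← mul_assoc, hjx m hjm, smul_mul_assoc, hjx n hjn, smul_smul, map_zsmul, h.map_x j hj]
  norm_num

lemma succ_mul_eq_or (hx12 : x 1 * x 2 = (2 : ℤ) • x 1) {k q : ℕ} (hk : 0 < k)
    (hkx : ∀ q, k < q → x k * x q = (2 : ℤ) • x k) (hq : k + 1 ≤ q) :
    x (k + 1) * x q = (2 : ℤ) • x (k + 1) ∨ x (k + 1) * x q = x k + x (k + 2) := by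
  obtain ⟨T, hT, hTq⟩ := h.exists_x_mul_x_eq_sum (k + 1) q k.succ_pos (by omega)
  have hmin : ∀ j, 0 < j → j ≤ k → (∀ q, j < q → x j * x q = (2 : ℤ) • x j) →
      (T.map (min j)).sum = 2 * j := fun j hj hjk hjx => by
    have := h.map_x_mul_mul_of_forall_lt hj hjx (by omega : j < k + 1) (by omega : j < q)
    rw [hTq, h.map_x_mul_sum hj hT] at this
    omega
  have hcard : Multiset.card T = 2 := by
    rw [← Multiset.sum_map_min_one hT, hmin 1 one_pos hk fun q => h.one_mul_eq hx12]
  have hsum : T.sum = 2 * (k + 1) := by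
    have := h.map_sum hT
    rw [← hTq, h.map_x_mul_x (k + 1) q k.succ_pos (by omega), min_eq_left hq] at this
    omega
  rcases Multiset.eq_of_sum_map_min hcard hsum (hmin k hk le_rfl hkx) with rfl | rfl
  · left; simpa [two_smul] using hTq
  · right; simpa using hTq

lemma mul_eq_of_lt (hx12 : x 1 * x 2 = (2 : ℤ) • x 1) {m n : ℕ} (hm : 0 < m) (hmn : m < n) :
    x m * x n = (2 : ℤ) • x m := by
  induction m, hm using Nat.le_induction generalizing n with
  | base => exact h.one_mul_eq hx12 hmn
  | succ k hk ih =>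
    refine (h.succ_mul_eq_or hx12 hk (fun _ => ih) hmn.le).resolve_right fun hkn => ?_
    have hright : f (x (k + 1) * (x (k + 1) * x n)) = 4 * k + 2 := by
      rw [hkn, mul_add, map_add, h.map_x_mul_x _ _ k.succ_pos hk,
        h.map_x_mul_x _ _ k.succ_pos (by omega)]
      omega
    have hleft : f (x (k + 1) * x (k + 1) * x n) = 4 * (k + 1) := by
      rcases h.succ_mul_eq_or hx12 hk (fun _ => ih) le_rfl with hsq | hsq
      · rw [hsq, smul_mul_assoc, map_zsmul, h.map_x_mul_x _ _ k.succ_pos (by omega), smul_eq_mul]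
        omega
      · rw [hsq, add_mul, map_add, h.map_x_mul_x _ _ hk (by omega),
          h.map_x_mul_x _ _ (by omega) (by omega)]
        omega
    rw [mul_assoc] at hleft
    omega

end IsBasevPair

theorem basev_lemma_general (R : Type*) [NonUnitalCommRing R]
    (x : ℕ → R)
    (b : Module.Basis {s : ℕ // 0 < s} ℤ R) (hb : ∀ s : {s : ℕ // 0 < s}, b s = x s.val)
    (hnonneg : ∀ m n : ℕ, 0 < m → 0 < n → ∀ s : {s : ℕ // 0 < s},
      0 ≤ b.repr (x m * x n) s)
    (hx12 : x 1 * x 2 = (2 : ℤ) • x 1)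
    (f : R →ₗ[ℤ] ℤ) (hf : ∀ s : ℕ, 0 < s → f (x s) = s)
    (hfmul : ∀ s t : ℕ, 0 < s → 0 < t → f (x s * x t) = 2 * min s t) :
    ∀ m n : ℕ, 0 < m → 0 < n → m ≠ n → x m * x n = (2 : ℤ) • x (min m n) := by
  have hprod : ∀ m n : ℕ, 0 < m → 0 < n →
      ∃ T : Multiset ℕ, (∀ s ∈ T, 0 < s) ∧ x m * x n = (T.map x).sum := fun m n hm hn => by
    obtain ⟨S, hS⟩ := b.exists_multiset_eq_sum_map (hnonneg m n hm hn)
    refine ⟨S.map Subtype.val, fun s hs => ?_, ?_⟩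
    · obtain ⟨s, -, rfl⟩ := Multiset.mem_map.mp hs
      exact s.2
    · rw [hS, Multiset.map_map]
      exact congrArg Multiset.sum (Multiset.map_congr rfl fun s _ => hb s)
  have h : IsBasevPair x f := ⟨hf, hfmul, hprod⟩
  intro m n hm hn hmn
  rcases hmn.lt_or_gt with hlt | hlt
  · rw [min_eq_left hlt.le]
    exact h.mul_eq_of_lt hx12 hm hlt
  · rw [min_eq_right hlt.le, mul_comm]
    exact h.mul_eq_of_lt hx12 hn hlt

/-- Bašev's lemma. `R` is a nonunital commutative associative ring with a free
`ℤ`-basis `x 1, x 2, …` (and `x 0 = 0`), products of basis elements are nonnegative integer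
combinations of basis elements, `x 1 * x 2 = 2 • x 1`, and the linear functional `f` with
`f (x s) = s` satisfies `f (x s * x t) = 2 * min s t`.  Then `x m * x n = 2 • x (min m n)`
whenever `m ≠ n`. -/
theorem basev_lemma (R : Type*) [NonUnitalCommRing R]
    (x : ℕ → R) (hx0 : x 0 = 0)
    (b : Module.Basis {s : ℕ // 0 < s} ℤ R) (hb : ∀ s : {s : ℕ // 0 < s}, b s = x s.val)
    (hnonneg : ∀ m n : ℕ, 0 < m → 0 < n → ∀ s : {s : ℕ // 0 < s},
      0 ≤ b.repr (x m * x n) s)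
    (hx12 : x 1 * x 2 = (2 : ℤ) • x 1)
    (f : R →ₗ[ℤ] ℤ) (hf : ∀ s : ℕ, 0 < s → f (x s) = s)
    (hfmul : ∀ s t : ℕ, 0 < s → 0 < t → f (x s * x t) = 2 * min s t) :
    ∀ m n : ℕ, 0 < m → 0 < n → m ≠ n → x m * x n = (2 : ℤ) • x (min m n) :=
  basev_lemma_general R x b hb hnonneg hx12 f hf hfmul
end

section
/- Let S be any set of positive integers containing no two consecutive integers. Define R to be the free abelian group on generators x_1, x_2, ... (with x_0 = 0) and multiplication determined on generators by: x_s x_t = 2 x_{min(s,t)} if s ≠ t; x_s x_s = 2 x_s if s ∉ S; and x_s x_s = x_{s-1} + x_{s+1} if s ∈ S; extended Z-bilinearly. Then R is an associative commutative ring, and the Z-linear functional f with f(x_s) = s satisfies f(x_s x_t) = 2·min(s,t) for all s, t. -/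
open scoped Classical

/-- The generator `x n` of the free abelian group on `ℕ → ℤ`, with `x 0 = 0`. -/
noncomputable def basevX (n : ℕ) : ℕ →₀ ℤ :=
  if n = 0 then 0 else Finsupp.single n 1

/-- The product of two generators, according to the set `S`. -/
noncomputable def basevGen (S : Set ℕ) (s t : ℕ) : ℕ →₀ ℤ :=
  if s = t then
    (if s ∈ S then basevX (s - 1) + basevX (s + 1) else (2 : ℤ) • basevX s)
  else (2 : ℤ) • basevX (min s t)

/-- The bilinear extension of `basevGen` to the free abelian group. -/
noncomputable def basevMul (S : Set ℕ) (a b : ℕ →₀ ℤ) : ℕ →₀ ℤ :=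
  a.sum fun s as => b.sum fun t bt => (as * bt) • basevGen S s t

/-- The `ℤ`-linear functional with `f (x s) = s`. -/
noncomputable def basevF (a : ℕ →₀ ℤ) : ℤ :=
  a.sum fun s as => as * (s : ℤ)

/-!
Both sides of every identity are `ℤ`-bilinear or trilinear, so it suffices to check them on the
basis vectors `single n 1`. Since `0 ∉ S`, the vector `single 0 1` multiplies everything to `0`,
and the remaining ones are the generators. Commutativity is the symmetry of `basevGen`. Given
commutativity, associativity amounts to `(x_s x_t) x_u` being symmetric in `t` and `u`, which for
`t < u` is a short case analysis: every product of generators except `x_m x_m` with `m ∈ S`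
equals `2 x_min`. When `m ∈ S`, the indices `m ± 1` are not in `S`, so the two terms produced by
squaring `x_m` satisfy `x_{m ± 1} x_k = 2 x_{min (m ± 1) k}` for every `k`.
-/

open Finsupp

noncomputable def basevMulₗ (S : Set ℕ) : (ℕ →₀ ℤ) →ₗ[ℤ] (ℕ →₀ ℤ) →ₗ[ℤ] ℕ →₀ ℤ :=
  linearCombination ℤ fun s => linearCombination ℤ (basevGen S s)

section
variable {S : Set ℕ}

theorem basevGen_comm (S : Set ℕ) (s t : ℕ) : basevGen S s t = basevGen S t s := by
  unfold basevGen
  split_ifs <;> simp_all [min_comm]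

theorem basevGen_self_of_mem {s : ℕ} (hs : s ∈ S) :
    basevGen S s s = basevX (s - 1) + basevX (s + 1) := by
  simp [basevGen, hs]

theorem basevGen_of_le {s t : ℕ} (hst : s ≤ t) (hs : s = t → s ∉ S) :
    basevGen S s t = (2 : ℤ) • basevX s := by
  rcases hst.lt_or_eq with hst | rfl
  · rw [basevGen, if_neg hst.ne, min_eq_left hst.le]
  · simp [basevGen, hs rfl]

theorem basevGen_of_ge {s t : ℕ} (hts : t ≤ s) (ht : t = s → t ∉ S) :
    basevGen S s t = (2 : ℤ) • basevX t := by
  rw [basevGen_comm, basevGen_of_le hts ht]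

theorem basevGen_zero_left (h0 : 0 ∉ S) (t : ℕ) : basevGen S 0 t = 0 := by
  simp [basevGen_of_le (Nat.zero_le t) fun _ => h0, basevX]

theorem basevMul_eq_basevMulₗ (a b : ℕ →₀ ℤ) : basevMul S a b = basevMulₗ S a b := by
  simp [basevMul, basevMulₗ, linearCombination_apply, LinearMap.finsupp_sum_apply, smul_sum,
    smul_smul]

theorem basevMulₗ_single_single (s t : ℕ) :
    basevMulₗ S (single s 1) (single t 1) = basevGen S s t := by
  simp [basevMulₗ]

theorem basevMulₗ_comm (a b : ℕ →₀ ℤ) : basevMulₗ S a b = basevMulₗ S b a := by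
  have hflip : (basevMulₗ S).flip = basevMulₗ S := by
    ext s t
    simp [basevMulₗ, basevGen_comm S s t]
  exact LinearMap.congr_fun₂ hflip b a

theorem basevMulₗ_X_single (h0 : 0 ∉ S) (n u : ℕ) :
    basevMulₗ S (basevX n) (single u 1) = basevGen S n u := by
  rcases eq_or_ne n 0 with rfl | hn
  · simp [basevX, basevGen_zero_left h0]
  · simp [basevX, hn, basevMulₗ]

theorem basevMulₗ_basevGen_single_comm (h0 : 0 ∉ S) (hS : ∀ n : ℕ, ¬(n ∈ S ∧ n + 1 ∈ S))
    (s t u : ℕ) :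
    basevMulₗ S (basevGen S s t) (single u 1) = basevMulₗ S (basevGen S s u) (single t 1) := by
  wlog htu : t < u generalizing t u
  · rcases (not_lt.1 htu).eq_or_lt with rfl | hut
    · rfl
    · exact (this u t hut).symm
  have hX := basevMulₗ_X_single h0
  rcases eq_or_ne s t with rfl | hst
  · rw [basevGen_of_le htu.le fun h => absurd h htu.ne, map_smul, LinearMap.smul_apply, hX]
    by_cases hs : s ∈ S
    · rw [basevGen_self_of_mem hs, map_add, LinearMap.add_apply, hX, hX,
        basevGen_of_le (by omega) (by omega), basevGen_of_le htu fun _ h => hS s ⟨hs, h⟩,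
        smul_add]
    · rw [basevGen_of_le le_rfl fun _ => hs, map_smul, LinearMap.smul_apply, hX,
        basevGen_of_le htu.le fun h => absurd h htu.ne]
  rcases eq_or_ne s u with rfl | hsu
  · rw [basevGen_of_ge htu.le fun h => absurd h htu.ne, map_smul, LinearMap.smul_apply, hX,
      basevGen_of_le htu.le fun h => absurd h htu.ne]
    by_cases hs : s ∈ S
    · have hs1 : s - 1 ∉ S := fun h => hS (s - 1) ⟨h, by rwa [Nat.sub_add_cancel (by omega)]⟩
      rw [basevGen_self_of_mem hs, map_add, LinearMap.add_apply, hX, hX,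
        basevGen_of_ge (by omega) fun h => h ▸ hs1, basevGen_of_ge (by omega) (by omega),
        ← add_smul, smul_smul]
      norm_num
    · rw [basevGen_of_le le_rfl fun _ => hs, map_smul, LinearMap.smul_apply, hX,
        basevGen_of_ge htu.le fun h => absurd h htu.ne, smul_smul]
  rw [basevGen, basevGen, if_neg hst, if_neg hsu, map_smul, map_smul, LinearMap.smul_apply,
    LinearMap.smul_apply, hX, hX]
  rcases lt_or_gt_of_ne hst with hst | hts
  · rw [min_eq_left hst.le, min_eq_left (hst.trans htu).le,
      basevGen_of_le (hst.trans htu).le (by omega), basevGen_of_le hst.le (by omega)]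
  · rw [min_eq_right hts.le, basevGen_of_le (by omega) (by omega),
      basevGen_of_ge (le_min hts.le htu.le) (by omega)]

theorem basevMulₗ_assoc (h0 : 0 ∉ S) (hS : ∀ n : ℕ, ¬(n ∈ S ∧ n + 1 ∈ S)) (a b c : ℕ →₀ ℤ) :
    basevMulₗ S (basevMulₗ S a b) c = basevMulₗ S a (basevMulₗ S b c) := by
  suffices (basevMulₗ S).compr₂ (basevMulₗ S) =
      (LinearMap.llcomp ℤ _ _ _ ∘ₗ basevMulₗ S).compl₂ (basevMulₗ S) from
    congr($this a b c)
  ext s t u : 6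
  simp only [LinearMap.compl₂_apply, LinearMap.compr₂_apply, LinearMap.coe_comp,
    Function.comp_apply, lsingle_apply, LinearMap.llcomp_apply]
  rw [basevMulₗ_single_single, basevMulₗ_single_single, basevMulₗ_comm (single s 1),
    basevMulₗ_basevGen_single_comm h0 hS t u s, basevGen_comm S t s]

theorem basevF_eq_linearCombination : basevF = linearCombination ℤ fun n : ℕ => (n : ℤ) := by
  ext a
  simp [basevF, linearCombination_apply]

theorem basevF_basevX (n : ℕ) : basevF (basevX n) = n := by
  rcases eq_or_ne n 0 with rfl | hn <;> simp [basevF_eq_linearCombination, basevX, *]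

theorem basevF_basevGen (h0 : 0 ∉ S) (s t : ℕ) :
    basevF (basevGen S s t) = 2 * min (s : ℤ) t := by
  have hF := basevF_eq_linearCombination ▸ basevF_basevX
  rw [basevF_eq_linearCombination]
  rcases eq_or_ne s t with rfl | hst
  · by_cases hs : s ∈ S
    · have : 1 ≤ s := Nat.one_le_iff_ne_zero.2 (ne_of_mem_of_not_mem hs h0)
      rw [basevGen_self_of_mem hs, map_add, hF, hF]
      omega
    · rw [basevGen_of_le le_rfl fun _ => hs, map_smul, hF]
      simp
  · rw [basevGen, if_neg hst, map_smul, hF, smul_eq_mul]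
    omega

end

/-- for a set `S` of positive integers with no two consecutive elements, the
free abelian group on `x 1, x 2, …` with multiplication `x s * x t = 2 x_{min s t}` for
`s ≠ t`, `x s * x s = 2 x s` for `s ∉ S`, and `x s * x s = x (s-1) + x (s+1)` for `s ∈ S`
is an associative commutative ring, and the functional `f` with `f (x s) = s` satisfies
`f (x s * x t) = 2 * min s t`. -/
theorem basev_ring_exists (S : Set ℕ)
    (hpos : ∀ n ∈ S, 0 < n)
    (hS : ∀ n : ℕ, ¬(n ∈ S ∧ n + 1 ∈ S)) :
    (∀ a b : ℕ →₀ ℤ, basevMul S a b = basevMul S b a) ∧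
    (∀ a b c : ℕ →₀ ℤ, basevMul S (basevMul S a b) c = basevMul S a (basevMul S b c)) ∧
    (∀ a b c : ℕ →₀ ℤ, basevMul S a (b + c) = basevMul S a b + basevMul S a c) ∧
    (∀ a b c : ℕ →₀ ℤ, basevMul S (a + b) c = basevMul S a c + basevMul S b c) ∧
    (∀ s t : ℕ, 0 < s → 0 < t →
      basevF (basevMul S (basevX s) (basevX t)) = 2 * min (s : ℤ) (t : ℤ)) := by
  have h0 : 0 ∉ S := fun h => (hpos 0 h).false
  simp only [basevMul_eq_basevMulₗ]
  refine ⟨basevMulₗ_comm, basevMulₗ_assoc h0 hS, fun a => map_add (basevMulₗ S a),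
    LinearMap.map_add₂ (basevMulₗ S), fun s t hs ht => ?_⟩
  rw [basevX, basevX, if_neg hs.ne', if_neg ht.ne', basevMulₗ_single_single,
    basevF_basevGen h0]
end

section
/- Let k be a field of characteristic p > 0, D = k[t]/(t^p), and J_n = D/(t^n) for 1 ≤ n ≤ p with the tensor product of D-modules given by the primitive comultiplication (Leibniz rule). If n ≤ p and 2n - 1 ≤ p, then J_n ⊗ J_n contains a Jordan block (indecomposable direct summand) of dimension 2n - 1; more precisely, the largest Jordan block in J_n ⊗ J_n has size min(2n - 1, p). -/
/-!
With `A = J ⊗ 1` and `B = 1 ⊗ J` commuting and `J ^ n = 0`, the binomial theorem kills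
`(A + B) ^ (2n - 1)`, and in characteristic `p` the Frobenius identity
`(A + B) ^ p = A ^ p + B ^ p` kills `(A + B) ^ p` once `n ≤ p`. Conversely, for
`n - 1 ≤ m ≤ 2n - 2` with `m < p`, the coefficient of `e₀ ⊗ e_{2n-2-m}` in
`(A + B) ^ m (e_{n-1} ⊗ e_{n-1})` is the binomial coefficient `m.choose (n - 1)`,
which is a unit mod `p`.
-/

open TensorProduct

/-- The `n × n` matrix with ones on the superdiagonal (nilpotent Jordan block). -/
def shiftMat (k : Type*) [Semiring k] (n : ℕ) : Matrix (Fin n) (Fin n) k :=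
  Matrix.of fun i j => if (i : ℕ) + 1 = (j : ℕ) then 1 else 0

theorem Matrix.mulVecLin_pow {R ι : Type*} [CommSemiring R] [Fintype ι] [DecidableEq ι]
    (A : Matrix ι ι R) (m : ℕ) : A.mulVecLin ^ m = (A ^ m).mulVecLin := by
  induction m with
  | zero => rw [pow_zero, pow_zero, Matrix.mulVecLin_one]; rfl
  | succ m ih => rw [pow_succ, pow_succ, Matrix.mulVecLin_mul, ih]; rfl

section ShiftMat

variable (k : Type*) [Semiring k] (n : ℕ)

theorem shiftMat_pow (m : ℕ) :
    shiftMat k n ^ m = Matrix.of fun i j : Fin n => if (i : ℕ) + m = j then 1 else 0 := by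
  induction m with
  | zero => ext i j; simp [Matrix.one_apply, Fin.ext_iff]
  | succ m ih =>
    ext i j
    rw [pow_succ, ih, Matrix.mul_apply]
    simp only [shiftMat, Matrix.of_apply, ite_mul, one_mul, zero_mul]
    rw [Fin.sum_univ_eq_sum_range (fun l => if (i : ℕ) + m = l then
      (if l + 1 = (j : ℕ) then (1 : k) else 0) else 0), Finset.sum_ite_eq]
    simp only [Finset.mem_range]
    have := j.isLt
    split_ifs <;> first | rfl | omega

theorem shiftMat_pow_eq_zero {m : ℕ} (h : n ≤ m) : shiftMat k n ^ m = 0 := by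
  ext i j
  simp only [shiftMat_pow, Matrix.of_apply, Matrix.zero_apply, ite_eq_right_iff]
  omega

theorem shiftMat_pow_mulVec_single (m : ℕ) (j : Fin n) :
    (shiftMat k n ^ m).mulVec (Pi.single j 1) =
      fun i : Fin n => if (i : ℕ) + m = j then (1 : k) else 0 := by
  ext i
  simp [Matrix.mulVec_single, shiftMat_pow]

end ShiftMat

section Tensor

variable {R M N : Type*} [CommSemiring R] [AddCommMonoid M] [AddCommMonoid N] [Module R M]
  [Module R N] (f : Module.End R M) (g : Module.End R N)

theorem commute_rTensor_lTensor : Commute (f.rTensor N) (g.lTensor M) := by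
  rw [Commute, SemiconjBy, Module.End.mul_eq_comp, Module.End.mul_eq_comp,
    LinearMap.rTensor_comp_lTensor, LinearMap.lTensor_comp_rTensor]

theorem rTensor_add_lTensor_pow_tmul (m : ℕ) (x : M) (y : N) :
    ((f.rTensor N + g.lTensor M) ^ m) (x ⊗ₜ y) =
      ∑ i ∈ Finset.range (m + 1), m.choose i • ((f ^ i) x ⊗ₜ (g ^ (m - i)) y) := by
  rw [(commute_rTensor_lTensor f g).add_pow, LinearMap.sum_apply]
  refine Finset.sum_congr rfl fun i _ => ?_
  rw [← Nat.cast_comm, ← nsmul_eq_mul, LinearMap.smul_apply, Module.End.mul_apply,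
    LinearMap.rTensor_pow, LinearMap.lTensor_pow, LinearMap.lTensor_tmul, LinearMap.rTensor_tmul]

theorem rTensor_add_lTensor_pow_eq_zero {a b : ℕ} (hf : f ^ a = 0) (hg : g ^ b = 0) :
    (f.rTensor N + g.lTensor M) ^ (a + b - 1) = 0 :=
  (commute_rTensor_lTensor f g).add_pow_add_eq_zero_of_pow_eq_zero
    (by rw [LinearMap.rTensor_pow, hf, LinearMap.rTensor_zero])
    (by rw [LinearMap.lTensor_pow, hg, LinearMap.lTensor_zero])

theorem rTensor_add_lTensor_pow_char {p : ℕ} (hp : p.Prime) [CharP R p] :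
    (f.rTensor N + g.lTensor M) ^ p = (f ^ p).rTensor N + (g ^ p).lTensor M := by
  obtain ⟨r, hr⟩ := (commute_rTensor_lTensor f g).exists_add_pow_prime_eq hp
  rw [hr, ← map_natCast (algebraMap R (Module.End R (M ⊗[R] N))), CharP.cast_eq_zero,
    map_zero, zero_mul, zero_mul, zero_mul, add_zero, LinearMap.rTensor_pow, LinearMap.lTensor_pow]

end Tensor

theorem rTensor_add_lTensor_shiftMat_pow_ne_zero {k : Type*} [CommSemiring k] {p : ℕ}
    (hp : p.Prime) [CharP k p] {n m : ℕ} (hnm : n ≤ m + 1) (hmn : m + 2 ≤ 2 * n)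
    (hmp : m < p) :
    ((shiftMat k n).mulVecLin.rTensor (Fin n → k) +
      (shiftMat k n).mulVecLin.lTensor (Fin n → k)) ^ m ≠ 0 := by
  intro h
  let e : Fin n → k := Pi.single ⟨n - 1, by omega⟩ 1
  let b := (Pi.basisFun k (Fin n)).tensorProduct (Pi.basisFun k (Fin n))
  have hcoeff :=
    congrArg (fun T => b.repr (T (e ⊗ₜ e)) (⟨0, by omega⟩, ⟨2 * n - 2 - m, by omega⟩)) h
  simp only [b, e, rTensor_add_lTensor_pow_tmul, Matrix.mulVecLin_pow, Matrix.mulVecLin_apply,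
    shiftMat_pow_mulVec_single, map_sum, map_nsmul, Finsupp.coe_finsetSum, Finset.sum_apply,
    Finsupp.smul_apply, Module.Basis.tensorProduct_repr_tmul_apply, Pi.basisFun_repr,
    LinearMap.zero_apply, map_zero, Finsupp.coe_zero, Pi.zero_apply, zero_add] at hcoeff
  rw [Finset.sum_eq_single (n - 1) (fun c _ hc => by rw [if_neg hc, smul_zero, smul_zero])
    (by simp only [Finset.mem_range]; omega), if_pos (by omega), if_pos rfl, one_smul,
    nsmul_eq_mul, mul_one, CharP.cast_eq_zero_iff k p] at hcoeff
  exact (Nat.Prime.coprime_iff_not_dvd hp).mp (hp.coprime_choose_of_lt hmp (by omega)) hcoeff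

/-- for `D = k[t]/(t^p)` (char `k = p`) and `J_n` the `n`-dimensional
indecomposable `D`-module (`1 ≤ n ≤ p`), the largest Jordan block of `J_n ⊗ J_n` under the
Leibniz action `t ⊗ 1 + 1 ⊗ t` has size `min (2n - 1) p`; in particular if `2n - 1 ≤ p`
then `J_n ⊗ J_n` contains a Jordan block of dimension `2n - 1`.  The largest Jordan block
size of a nilpotent operator is its nilpotency index. -/
theorem jordan_block_tensor_square_nilpotency_index
    (k : Type*) [Field k] (p : ℕ) (hp : p.Prime) [CharP k p]
    (n : ℕ) (hn1 : 1 ≤ n) (hnp : n ≤ p) :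
    let J := (shiftMat k n).mulVecLin
    let TT := LinearMap.rTensor (Fin n → k) J + LinearMap.lTensor (Fin n → k) J
    TT ^ (min (2 * n - 1) p) = 0 ∧ TT ^ (min (2 * n - 1) p - 1) ≠ 0 := by
  intro J TT
  have hJ : J ^ n = 0 := by
    rw [Matrix.mulVecLin_pow, shiftMat_pow_eq_zero k n le_rfl, Matrix.mulVecLin_zero]
  refine ⟨?_, rTensor_add_lTensor_shiftMat_pow_ne_zero hp (by omega) (by omega) (by omega)⟩
  rcases min_cases (2 * n - 1) p with ⟨h, -⟩ | ⟨h, -⟩ <;> rw [h]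
  · simpa only [two_mul] using rTensor_add_lTensor_pow_eq_zero J J hJ hJ
  · rw [rTensor_add_lTensor_pow_char J J hp, pow_eq_zero_of_le hnp hJ, LinearMap.rTensor_zero,
      LinearMap.lTensor_zero, add_zero]
end

section
/- Let k be a field of characteristic 2 and A = k[x,y]/(x²,y²). For a point p = [a:b] ∈ P¹(k), choose s₂ = a x + b y and s₁ = c x + d y with {s₁,s₂} a basis of the span of x,y. For n ≥ 1, let V_{2n}(p) be the 2n-dimensional A-module on M_ℓ ⊕ M_u (each of dimension n) where s₁ acts by the block matrix with identity I_n in the upper right block and zeros elsewhere, and s₂ acts with the nilpotent Jordan block N_n (rank n-1) in the upper right block and zeros elsewhere. Then V_{2n}(p) is an indecomposable A-module. -/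
/-!
Write vectors of `V` as pairs `(x, y) ∈ M_ℓ × M_u`. For a decomposition `V = W₁ ⊕ W₂` into
submodules, let `Uᵢ ⊆ M_u` be the second coordinates of `Wᵢ` and `Lᵢ = Wᵢ ∩ M_ℓ`. Since
`s₁ (x, y) = (y, 0)`, we have `Uᵢ ⊆ Lᵢ`; as `U₁ + U₂ = M_u` and `L₁ ∩ L₂ = 0`, the modular law
gives `Uᵢ = Lᵢ`. Then `s₂ (x, y) = (N y, 0)` shows that each `Uᵢ` is `N`-invariant, and
`U₁ ∩ U₂ = 0`. But every nonzero `N`-invariant subspace contains `e₀`: if `u` has its last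
nonzero coordinate at index `m`, then `N^m u` is a nonzero multiple of `e₀`. So some `Uᵢ = 0`,
hence `Lᵢ = 0` and `Wᵢ = 0`.
-/

open Matrix

section ShiftMat

variable {k : Type*} [DivisionRing k] {n : ℕ}

lemma shiftMat_mulVec_apply (y : Fin n → k) (i : Fin n) :
    (shiftMat k n *ᵥ y) i = if h : (i : ℕ) + 1 < n then y ⟨i + 1, h⟩ else 0 := by
  simp only [mulVec, dotProduct, shiftMat, of_apply, ite_mul, one_mul, zero_mul]
  split_ifs with h
  · refine (Finset.sum_eq_single ⟨i + 1, h⟩ (fun j _ hj => if_neg ?_) (by simp)).trans (if_pos rfl)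
    exact fun hij => hj (Fin.ext hij.symm)
  · exact Finset.sum_eq_zero fun j _ => if_neg (by omega)

lemma shiftMat_mulVec_iterate_apply (j : ℕ) (y : Fin n → k) (i : Fin n) :
    (shiftMat k n *ᵥ ·)^[j] y i = if h : (i : ℕ) + j < n then y ⟨i + j, h⟩ else 0 := by
  induction j generalizing i with
  | zero => simp
  | succ j ih =>
    rw [Function.iterate_succ_apply', shiftMat_mulVec_apply]
    split_ifs with h₁ h₂ h₂
    · rw [ih, dif_pos (by simp only; omega)]
      simp only [add_assoc, add_comm 1 j]
    · rw [ih, dif_neg (by simp only; omega)]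
    · omega
    · rfl

lemma single_zero_mem_of_shiftMat_invariant {U : Submodule k (Fin (n + 1) → k)}
    (hU : ∀ y ∈ U, shiftMat k (n + 1) *ᵥ y ∈ U) (hne : U ≠ ⊥) : Pi.single 0 1 ∈ U := by
  classical
  obtain ⟨u, hu, hu0⟩ := Submodule.exists_mem_ne_zero_of_ne_bot hne
  obtain ⟨m, hm, hmax⟩ := (Finset.univ.filter (u · ≠ 0)).exists_max_image (fun i => (i : ℕ))
    (by simpa [Finset.filter_nonempty_iff, Function.ne_iff] using hu0)
  have hiter : ∀ j, (shiftMat k (n + 1) *ᵥ ·)^[j] u ∈ U := by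
    intro j
    induction j with
    | zero => exact hu
    | succ j ih => rw [Function.iterate_succ_apply']; exact hU _ ih
  have hshift : (shiftMat k (n + 1) *ᵥ ·)^[m] u = u m • Pi.single 0 1 := by
    funext i
    rw [shiftMat_mulVec_iterate_apply, Pi.smul_apply]
    by_cases hi : i = 0
    · subst hi
      simp [m.is_lt]
    · rw [Pi.single_eq_of_ne hi, smul_zero]
      refine dite_eq_right_iff.mpr fun h => by_contra fun hne => hi (Fin.ext ?_)
      have hle : (i : ℕ) + m ≤ m := hmax ⟨i + m, h⟩ (by simpa using hne)
      simp only [Fin.val_zero]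
      omega
  have hum : u m ≠ 0 := (Finset.mem_filter.mp hm).2
  simpa [hshift, smul_smul, inv_mul_cancel₀ hum] using U.smul_mem (u m)⁻¹ (hiter m)

lemma eq_bot_or_eq_bot_of_disjoint_of_shiftMat_invariant {U₁ U₂ : Submodule k (Fin n → k)}
    (h₁ : ∀ y ∈ U₁, shiftMat k n *ᵥ y ∈ U₁) (h₂ : ∀ y ∈ U₂, shiftMat k n *ᵥ y ∈ U₂)
    (hdisj : Disjoint U₁ U₂) : U₁ = ⊥ ∨ U₂ = ⊥ := by
  cases n with
  | zero => exact Or.inl (Submodule.eq_bot_of_subsingleton)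
  | succ n =>
    by_contra! hne
    have hmem₁ := single_zero_mem_of_shiftMat_invariant h₁ hne.1
    have hmem₂ := single_zero_mem_of_shiftMat_invariant h₂ hne.2
    exact one_ne_zero (Pi.single_eq_zero_iff.mp (Submodule.disjoint_def.mp hdisj _ hmem₁ hmem₂))

end ShiftMat

section UpperBlock

variable {R M : Type*} [Ring R] [AddCommGroup M] [Module R M]

local notation "snd" => LinearMap.snd R M M
local notation "inl" => LinearMap.inl R M M

lemma map_snd_le_comap_inl {W : Submodule R (M × M)} (h : ∀ v ∈ W, (v.2, (0 : M)) ∈ W) :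
    W.map snd ≤ W.comap inl := by
  rintro _ ⟨v, hv, rfl⟩
  exact h v hv

lemma comap_inl_inf_comap_inl_eq_bot {W₁ W₂ : Submodule R (M × M)} (hinf : W₁ ⊓ W₂ = ⊥) :
    W₁.comap inl ⊓ W₂.comap inl = ⊥ := by
  rw [← Submodule.comap_inf, hinf, ← LinearMap.ker, Submodule.ker_inl]

lemma comap_inl_eq_map_snd {W₁ W₂ : Submodule R (M × M)}
    (h₁ : ∀ v ∈ W₁, (v.2, (0 : M)) ∈ W₁) (h₂ : ∀ v ∈ W₂, (v.2, (0 : M)) ∈ W₂)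
    (hinf : W₁ ⊓ W₂ = ⊥) (hsup : W₁ ⊔ W₂ = ⊤) : W₁.comap inl = W₁.map snd := by
  have hU : W₁.map snd ⊔ W₂.map snd = ⊤ := by
    rw [← Submodule.map_sup, hsup, Submodule.map_top, Submodule.range_snd]
  refine (eq_of_le_of_inf_le_of_sup_le (z := W₂.map snd) (map_snd_le_comap_inl h₁) ?_ ?_).symm
  · calc W₁.comap inl ⊓ W₂.map snd ≤ W₁.comap inl ⊓ W₂.comap inl :=
          inf_le_inf_left _ (map_snd_le_comap_inl h₂)
      _ = ⊥ := comap_inl_inf_comap_inl_eq_bot hinf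
      _ ≤ _ := bot_le
  · exact hU ▸ le_top

lemma map_snd_invariant {W : Submodule R (M × M)} {T : M → M}
    (hT : ∀ v ∈ W, (T v.2, (0 : M)) ∈ W) (hW : W.comap inl = W.map snd) :
    ∀ y ∈ W.map snd, T y ∈ W.map snd := by
  rintro _ ⟨v, hv, rfl⟩
  exact hW ▸ hT v hv

lemma eq_bot_of_map_snd_eq_bot {W : Submodule R (M × M)} (hW : W.comap inl = W.map snd)
    (hbot : W.map snd = ⊥) : W = ⊥ := by
  refine (Submodule.eq_bot_iff W).mpr fun v hv => ?_
  have h₂ : v.2 = 0 := (Submodule.mem_bot R).mp (hbot ▸ Submodule.mem_map_of_mem hv)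
  have h₁ : v.1 = 0 := by
    refine (Submodule.mem_bot R).mp (hbot ▸ hW ▸ ?_)
    show (v.1, (0 : M)) ∈ W
    exact h₂ ▸ hv
  exact Prod.ext h₁ h₂

end UpperBlock

theorem basev_module_indecomposable_general
    (k : Type*) [Field k] (n : ℕ) :
    let V := (Fin n → k) × (Fin n → k)
    let S1 : V →ₗ[k] V :=
      LinearMap.prod (LinearMap.snd k (Fin n → k) (Fin n → k)) 0
    let S2 : V →ₗ[k] V :=
      LinearMap.prod ((shiftMat k n).mulVecLin ∘ₗ LinearMap.snd k (Fin n → k) (Fin n → k)) 0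
    ∀ W₁ W₂ : Submodule k V,
      (∀ v ∈ W₁, S1 v ∈ W₁) → (∀ v ∈ W₁, S2 v ∈ W₁) →
      (∀ v ∈ W₂, S1 v ∈ W₂) → (∀ v ∈ W₂, S2 v ∈ W₂) →
      W₁ ⊓ W₂ = ⊥ → W₁ ⊔ W₂ = ⊤ → W₁ = ⊥ ∨ W₂ = ⊥ := by
  intro V S1 S2 W₁ W₂ h₁₁ h₁₂ h₂₁ h₂₂ hinf hsup
  have hW₁ := comap_inl_eq_map_snd h₁₁ h₂₁ hinf hsup
  have hW₂ := comap_inl_eq_map_snd h₂₁ h₁₁ (inf_comm W₁ W₂ ▸ hinf) (sup_comm W₁ W₂ ▸ hsup)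
  have hdisj : Disjoint (W₁.map (LinearMap.snd k _ _)) (W₂.map (LinearMap.snd k _ _)) := by
    rw [← hW₁, ← hW₂, disjoint_iff]
    exact comap_inl_inf_comap_inl_eq_bot hinf
  exact (eq_bot_or_eq_bot_of_disjoint_of_shiftMat_invariant (map_snd_invariant h₁₂ hW₁)
    (map_snd_invariant h₂₂ hW₂) hdisj).imp (eq_bot_of_map_snd_eq_bot hW₁)
    (eq_bot_of_map_snd_eq_bot hW₂)

/-- Bašev: over an algebraically closed field of characteristic 2, the
`2n`-dimensional module `V_{2n}(p)` over `A = k[x,y]/(x²,y²)`, given on `M_ℓ ⊕ M_u`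
(each of dimension `n`) by `s₁ ↦ [[0, I_n],[0,0]]` and `s₂ ↦ [[0, N_n],[0,0]]`,
is indecomposable: any two invariant submodules intersecting trivially and spanning
everything must include a trivial one. -/
theorem basev_module_indecomposable
    (k : Type*) [Field k] [IsAlgClosed k] [CharP k 2] (n : ℕ) (hn : 1 ≤ n) :
    let V := (Fin n → k) × (Fin n → k)
    let S1 : V →ₗ[k] V :=
      LinearMap.prod (LinearMap.snd k (Fin n → k) (Fin n → k)) 0
    let S2 : V →ₗ[k] V :=
      LinearMap.prod ((shiftMat k n).mulVecLin ∘ₗ LinearMap.snd k (Fin n → k) (Fin n → k)) 0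
    ∀ W₁ W₂ : Submodule k V,
      (∀ v ∈ W₁, S1 v ∈ W₁) → (∀ v ∈ W₁, S2 v ∈ W₁) →
      (∀ v ∈ W₂, S1 v ∈ W₂) → (∀ v ∈ W₂, S2 v ∈ W₂) →
      W₁ ⊓ W₂ = ⊥ → W₁ ⊔ W₂ = ⊤ → W₁ = ⊥ ∨ W₂ = ⊥ :=
  basev_module_indecomposable_general k n
end

section
/- Let k be a field of characteristic p > 0, A = k[x,y]/(x^p,y^p), and for a ∈ k let s₁ = x, s₂ = a x + y. Let V be the p-dimensional A-module annihilated by s₂ on which s₁ acts by the nilpotent Jordan block J_p, with basis s₁^{p-1}v, ..., s₁v, v. Write ω(s₁) = ((s₁⊗1 + 1⊗s₁)^p − (s₁^p⊗1 + 1⊗s₁^p))/p, the formal Witt cocycle, an integer combination of s₁^n ⊗ s₁^m with n+m = p, n,m ≥ 1. Then ω(s₁) does not annihilate V ⊗_k V; in particular ω(s₁)·(s₁^{p-2}v ⊗ v) = s₁^{p-1}v ⊗ s₁^{p-1}v ≠ 0. -/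
open TensorProduct

/-- `n.choose i / n` is truncated division: the exact quotient only when `n` is prime. -/
def wittCocycle {R M N : Type*} [CommSemiring R] [AddCommMonoid M] [Module R M]
    [AddCommMonoid N] [Module R N] (n : ℕ) (f : M →ₗ[R] M) (g : N →ₗ[R] N) :
    (M ⊗[R] N) →ₗ[R] (M ⊗[R] N) :=
  ∑ i ∈ Finset.Ioo 0 n, (n.choose i / n) • TensorProduct.map (f ^ i) (g ^ (n - i))

/-- On `x ⊗ y` with `f² x = 0` only the term `i = 1`, of coefficient `C(n,1)/n = 1`, survives. -/
theorem wittCocycle_tmul_of_sq_eq_zero {R M N : Type*} [CommSemiring R] [AddCommMonoid M]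
    [Module R M] [AddCommMonoid N] [Module R N] {n : ℕ} (hn : 1 < n)
    (f : M →ₗ[R] M) (g : N →ₗ[R] N) {x : M} (hx : (f ^ 2) x = 0) (y : N) :
    wittCocycle n f g (x ⊗ₜ y) = f x ⊗ₜ (g ^ (n - 1)) y := by
  have high_terms_vanish : ∀ i ∈ Finset.Ioo 0 n, i ≠ 1 →
      ((n.choose i / n) • TensorProduct.map (f ^ i) (g ^ (n - i))) (x ⊗ₜ y) = 0 := by
    intro i hi hi1
    obtain ⟨m, rfl⟩ : ∃ m, i = m + 2 := ⟨i - 2, by grind⟩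
    simp [pow_add, hx]
  rw [wittCocycle, LinearMap.sum_apply, Finset.sum_eq_single 1 high_terms_vanish
    (fun h => absurd (Finset.mem_Ioo.mpr ⟨one_pos, hn⟩) h)]
  simp [Nat.div_self (zero_lt_one.trans hn)]

section shiftMat

variable (k : Type*) [CommSemiring k] {n : ℕ}

theorem shiftMat_mulVecLin_single_zero (h : 0 < n) (c : k) :
    (shiftMat k n).mulVecLin (Pi.single ⟨0, h⟩ c) = 0 := by
  funext i
  simp [shiftMat]

theorem shiftMat_mulVecLin_single_succ (j : ℕ) (h : j + 1 < n) (c : k) :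
    (shiftMat k n).mulVecLin (Pi.single ⟨j + 1, h⟩ c) = Pi.single ⟨j, by omega⟩ c := by
  funext i
  simp [shiftMat, Pi.single_apply, Fin.ext_iff]

theorem shiftMat_mulVecLin_pow_single (m j : ℕ) (h : j + m < n) (c : k) :
    ((shiftMat k n).mulVecLin ^ m) (Pi.single ⟨j + m, h⟩ c) = Pi.single ⟨j, by omega⟩ c := by
  induction m with
  | zero => rfl
  | succ m ih =>
    rw [pow_succ, Module.End.mul_apply]
    exact (congrArg _ (shiftMat_mulVecLin_single_succ k (j + m) h c)).trans (ih (by omega))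

end shiftMat

theorem witt_cocycle_not_annihilating_general
    (k : Type*) [Field k] (p : ℕ) (hp : p.Prime) :
    let V := Fin p → k
    let S : V →ₗ[k] V := (shiftMat k p).mulVecLin
    let W : (V ⊗[k] V) →ₗ[k] (V ⊗[k] V) :=
      ∑ i ∈ Finset.Ioo 0 p, (p.choose i / p) • TensorProduct.map (S ^ i) (S ^ (p - i))
    let v : V := Pi.single ⟨p - 1, Nat.sub_lt hp.pos one_pos⟩ 1
    let e1 : V := Pi.single ⟨1, hp.one_lt⟩ 1     -- s₁^{p-2} v
    let e0 : V := Pi.single ⟨0, hp.pos⟩ 1        -- s₁^{p-1} v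
    W (e1 ⊗ₜ[k] v) = e0 ⊗ₜ[k] e0 ∧ (e0 ⊗ₜ[k] e0 : V ⊗[k] V) ≠ 0 := by
  intro V S W v e1 e0
  have hS_e1 : S e1 = e0 := shiftMat_mulVecLin_single_succ k 0 hp.one_lt 1
  have hS_e0 : S e0 = 0 := shiftMat_mulVecLin_single_zero k hp.pos 1
  have hS_v : (S ^ (p - 1)) v = e0 := by
    simpa using shiftMat_mulVecLin_pow_single k (p - 1) 0 (by have := hp.pos; omega) (1 : k)
  have hS_sq_e1 : (S ^ 2) e1 = 0 := by simp [sq, hS_e1, hS_e0]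
  refine ⟨?_, ?_⟩
  · change wittCocycle p S S (e1 ⊗ₜ v) = _
    rw [wittCocycle_tmul_of_sq_eq_zero hp.one_lt S S hS_sq_e1, hS_e1, hS_v]
  · simpa using
      ((Pi.basisFun k (Fin p)).tensorProduct (Pi.basisFun k (Fin p))).ne_zero (⟨0, hp.pos⟩, ⟨0, hp.pos⟩)

/-- let `V` be the `p`-dimensional module with `s₂ = a x + b y` acting by `0`
and `s₁` acting by the Jordan block `J_p` with basis `s₁^{p-1} v, …, s₁ v, v`
(here `v = e_{p-1}` and `s₁^i v = e_{p-1-i}`).  The formal Witt cocycle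
`ω(s₁) = Σ_{0<i<p} (C(p,i)/p) · s₁^i ⊗ s₁^{p-i}` does not annihilate `V ⊗ V`; in
particular `ω(s₁)·(s₁^{p-2} v ⊗ v) = s₁^{p-1} v ⊗ s₁^{p-1} v ≠ 0`. -/
theorem witt_cocycle_not_annihilating
    (k : Type*) [Field k] (p : ℕ) (hp : p.Prime) [CharP k p] :
    let V := Fin p → k
    let S : V →ₗ[k] V := (shiftMat k p).mulVecLin
    let W : (V ⊗[k] V) →ₗ[k] (V ⊗[k] V) :=
      ∑ i ∈ Finset.Ioo 0 p, (p.choose i / p) • TensorProduct.map (S ^ i) (S ^ (p - i))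
    let v : V := Pi.single ⟨p - 1, Nat.sub_lt hp.pos one_pos⟩ 1
    let e1 : V := Pi.single ⟨1, hp.one_lt⟩ 1     -- s₁^{p-2} v
    let e0 : V := Pi.single ⟨0, hp.pos⟩ 1        -- s₁^{p-1} v
    W (e1 ⊗ₜ[k] v) = e0 ⊗ₜ[k] e0 ∧ (e0 ⊗ₜ[k] e0 : V ⊗[k] V) ≠ 0 :=
  witt_cocycle_not_annihilating_general k p hp
end

section
/- Let k be a field of characteristic p > 2 and let g be the Heisenberg Lie algebra of dimension 3 with basis x, y, z, [x,y] = z central, and trivial p-operation, with restricted enveloping algebra A = k⟨x,y,z⟩/([x,y]−z, [z,x], [z,y], x^p, y^p, z^p). Let V = A ⊗_{u(⟨x⟩)} k be the module induced from the trivial ⟨x⟩-module, with PBW basis {y^i z^j ⊗ 1 : 0 ≤ i,j ≤ p−1}. Then the restriction of V to k[x]/(x^p) decomposes as V|_{⟨x⟩} ≅ 2J_1 ⊕ 2J_2 ⊕ ... ⊕ 2J_{p−1} ⊕ J_p, where J_i is the i-dimensional indecomposable k[x]/(x^p)-module. -/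
/-- The action of `x` on the induced module `V = A ⊗_{u(⟨x⟩)} k` for the 3-dimensional
Heisenberg Lie algebra, on the PBW basis `{yⁱ zʲ ⊗ 1 : 0 ≤ i,j ≤ p−1}`:
`x · yⁱ zʲ ⊗ 1 = i · y^{i−1} z^{j+1} ⊗ 1`. -/
def heisXop (k : Type*) [Field k] (p : ℕ) :
    (Fin p × Fin p → k) →ₗ[k] (Fin p × Fin p → k) :=
  (Matrix.of fun r c : Fin p × Fin p =>
    if (r.1 : ℕ) + 1 = (c.1 : ℕ) ∧ (r.2 : ℕ) = (c.2 : ℕ) + 1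
    then ((c.1 : ℕ) : k) else 0).mulVecLin

/-!
On the PBW basis, `x` sends `yⁱ zʲ ⊗ 1` to `i · yⁱ⁻¹ zʲ⁺¹ ⊗ 1`: it moves along the antidiagonals
`i + j = s` of the `p × p` grid of exponents and kills the end of each one (`i = 0`, or
`j = p - 1` because `zᵖ = 0`). Rescaling `yⁱ zʲ ⊗ 1` by `i!`, a unit since `i < p`, turns every
nonzero coefficient into `1`, so each antidiagonal becomes one Jordan chain: of length `r + 1`
for `s = r < p - 1` and for `s = 2p - 2 - r`, and of length `p` for `s = p - 1`.
-/

open scoped Nat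

lemma shiftMat_mulVecLin_apply {k : Type*} [CommSemiring k] {n : ℕ} (w : Fin n → k)
    (l : Fin n) :
    (shiftMat k n).mulVecLin w l = if h : (l : ℕ) + 1 < n then w ⟨l + 1, h⟩ else 0 := by
  simp only [Matrix.mulVecLin_apply, Matrix.mulVec, dotProduct, shiftMat, Matrix.of_apply,
    ite_mul, one_mul, zero_mul]
  split_ifs with h
  · rw [Finset.sum_eq_single_of_mem ⟨l + 1, h⟩ (Finset.mem_univ _) fun i _ hi =>
      if_neg fun h' => hi (Fin.ext h'.symm), if_pos rfl]
  · exact Finset.sum_eq_zero fun i _ => if_neg (by omega)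

lemma CharP.cast_factorial_ne_zero (R : Type*) [NonAssocSemiring R] [NoZeroDivisors R]
    [Nontrivial R] (p : ℕ) [CharP R p] {i : ℕ} (hi : i < p) : (i ! : R) ≠ 0 := by
  rw [Ne, CharP.cast_eq_zero_iff R p]
  rcases CharP.char_is_prime_or_zero R p with hp | rfl
  · exact fun h => (hp.dvd_factorial.1 h).not_gt hi
  · omega

namespace Heisenberg

variable {k : Type*} {p : ℕ}

-- `x` with all its coefficients replaced by `1`, written in coordinates.
def antidiagShift [Zero k] (u : Fin p × Fin p → k) (ab : Fin p × Fin p) : k :=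
  if h : (ab.1 : ℕ) + 1 < p ∧ 1 ≤ (ab.2 : ℕ) then
    u (⟨ab.1 + 1, h.1⟩, ⟨ab.2 - 1, by omega⟩)
  else 0

lemma antidiagShift_comp [CommSemiring k] {n : ℕ} (f : Fin n → Fin p × Fin p)
    (hnext : ∀ (l : Fin n) (h : (l : ℕ) + 1 < n),
      ((f ⟨l + 1, h⟩).1 : ℕ) = (f l).1 + 1 ∧ ((f ⟨l + 1, h⟩).2 : ℕ) + 1 = (f l).2)
    (hlast : ∀ l : Fin n, (f l).1 + 1 < p ∧ 1 ≤ ((f l).2 : ℕ) → (l : ℕ) + 1 < n)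
    (u : Fin p × Fin p → k) :
    antidiagShift u ∘ f = (shiftMat k n).mulVecLin (u ∘ f) := by
  funext l
  rw [Function.comp_apply, shiftMat_mulVecLin_apply, antidiagShift]
  by_cases h : (l : ℕ) + 1 < n
  · obtain ⟨h1, h2⟩ := hnext l h
    rw [dif_pos (by omega), dif_pos h, Function.comp_apply]
    congr 1; ext <;> dsimp only <;> omega
  · rw [dif_neg (mt (hlast l) h), dif_neg h]

-- The antidiagonals `i + j = r`, `i + j = 2p - 2 - r` and `i + j = p - 1`, by increasing `i`.
def lowerChain (r : Fin (p - 1)) (l : Fin (r + 1)) : Fin p × Fin p :=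
  (⟨l, by omega⟩, ⟨r - l, by omega⟩)

def upperChain (r : Fin (p - 1)) (l : Fin (r + 1)) : Fin p × Fin p :=
  (⟨p - 1 - r + l, by omega⟩, ⟨p - 1 - l, by omega⟩)

def mainChain (l : Fin p) : Fin p × Fin p :=
  (l, ⟨p - 1 - l, by omega⟩)

abbrev Blocks (k : Type*) (p : ℕ) :=
  (Π r : Fin (p - 1), Fin 2 → (Fin ((r : ℕ) + 1) → k)) × (Fin p → k)

lemma apply_eq_apply_of_val_eq {α : Type*} {n : ℕ} {m : Fin n → ℕ}
    (f : (r : Fin n) → Fin (m r) → α) {r r' : Fin n} {l : Fin (m r)} {l' : Fin (m r')}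
    (hr : (r : ℕ) = r') (hl : (l : ℕ) = l') : f r l = f r' l' := by
  obtain rfl := Fin.ext hr
  obtain rfl := Fin.ext hl
  rfl

def ofBlocks [Zero k] (w : Blocks k p) (ij : Fin p × Fin p) : k :=
  if h : (ij.1 : ℕ) + ij.2 < p - 1 then w.1 ⟨ij.1 + ij.2, h⟩ 0 ⟨ij.1, by simp only; omega⟩
  else if h' : (ij.1 : ℕ) + ij.2 = p - 1 then w.2 ij.1
  else w.1 ⟨2 * p - 2 - (ij.1 + ij.2), by omega⟩ 1 ⟨p - 1 - ij.2, by simp only; omega⟩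

lemma ofBlocks_lowerChain [Zero k] (w : Blocks k p) (r : Fin (p - 1)) (l : Fin (r + 1)) :
    ofBlocks w (lowerChain r l) = w.1 r 0 l := by
  rw [ofBlocks, dif_pos (by simp only [lowerChain]; omega)]
  exact apply_eq_apply_of_val_eq (fun r => w.1 r 0) (by simp only [lowerChain]; omega) rfl

lemma ofBlocks_upperChain [Zero k] (w : Blocks k p) (r : Fin (p - 1)) (l : Fin (r + 1)) :
    ofBlocks w (upperChain r l) = w.1 r 1 l := by
  rw [ofBlocks, dif_neg (by simp only [upperChain]; omega),
    dif_neg (by simp only [upperChain]; omega)]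
  exact apply_eq_apply_of_val_eq (fun r => w.1 r 1) (by simp only [upperChain]; omega)
    (by simp only [upperChain]; omega)

lemma ofBlocks_mainChain [Zero k] (w : Blocks k p) (l : Fin p) :
    ofBlocks w (mainChain l) = w.2 l := by
  rw [ofBlocks, dif_neg (by simp only [mainChain]; omega),
    dif_pos (by simp only [mainChain]; omega)]
  rfl

def toBlocks [Semiring k] : (Fin p × Fin p → k) ≃ₗ[k] Blocks k p where
  toFun u := (fun r => ![u ∘ lowerChain r, u ∘ upperChain r], u ∘ mainChain)
  map_add' u v := Prod.ext (funext fun r => funext fun c => by fin_cases c <;> rfl) rfl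
  map_smul' a u := Prod.ext (funext fun r => funext fun c => by fin_cases c <;> rfl) rfl
  invFun := ofBlocks
  left_inv u := by
    funext ij
    unfold ofBlocks
    split_ifs <;> refine congrArg u (Prod.ext (Fin.ext ?_) (Fin.ext ?_)) <;>
      simp only [lowerChain, upperChain, mainChain] <;> omega
  right_inv w := by
    refine Prod.ext (funext fun r => funext fun c => funext fun l => ?_) (funext fun l => ?_)
    · fin_cases c
      · exact ofBlocks_lowerChain w r l
      · exact ofBlocks_upperChain w r l
    · exact ofBlocks_mainChain w l

def blockShift [CommSemiring k] (w : Blocks k p) : Blocks k p :=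
  (fun r c => (shiftMat k (r + 1)).mulVecLin (w.1 r c), (shiftMat k p).mulVecLin w.2)

lemma toBlocks_antidiagShift [CommSemiring k] (u : Fin p × Fin p → k) :
    toBlocks (antidiagShift u) = blockShift (toBlocks u) := by
  refine Prod.ext (funext fun r => funext fun c => ?_) ?_
  · fin_cases c
    · exact antidiagShift_comp _ (fun l h => by simp only [lowerChain, true_and]; omega)
        (fun l h => by simp only [lowerChain] at h; omega) u
    · exact antidiagShift_comp _ (fun l h => by simp only [upperChain]; omega)
        (fun l h => by simp only [upperChain] at h; omega) u
  · exact antidiagShift_comp _ (fun l h => by simp only [mainChain, true_and]; omega)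
      (fun l h => by simp only [mainChain] at h; omega) u

lemma heisXop_apply [Field k] (v : Fin p × Fin p → k) (ab : Fin p × Fin p) :
    heisXop k p v ab = ((ab.1 : ℕ) + 1 : k) * antidiagShift v ab := by
  simp only [heisXop, Matrix.mulVecLin_apply, Matrix.mulVec, dotProduct, Matrix.of_apply,
    antidiagShift, ite_mul, zero_mul]
  split_ifs with h
  · rw [Finset.sum_eq_single_of_mem (⟨ab.1 + 1, h.1⟩, ⟨ab.2 - 1, by omega⟩) (Finset.mem_univ _)
      fun c _ hc => if_neg ?_, if_pos ⟨rfl, by dsimp only; omega⟩]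
    · push_cast; rfl
    · rintro ⟨h1, h2⟩
      exact hc (Prod.ext (Fin.ext h1.symm) (Fin.ext (by dsimp only; omega)))
  · rw [mul_zero]
    exact Finset.sum_eq_zero fun c _ => if_neg (by omega)

def factorialScaling [Field k] [CharP k p] : (Fin p × Fin p → k) ≃ₗ[k] (Fin p × Fin p → k) :=
  LinearEquiv.piCongrRight fun ij =>
    LinearEquiv.smulOfNeZero k k ((ij.1 : ℕ) ! : k) (CharP.cast_factorial_ne_zero k p ij.1.isLt)

lemma factorialScaling_heisXop [Field k] [CharP k p] (v : Fin p × Fin p → k) :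
    factorialScaling (heisXop k p v) = antidiagShift (factorialScaling v) := by
  funext ab
  simp only [factorialScaling, LinearEquiv.piCongrRight_apply, LinearEquiv.smulOfNeZero_apply,
    heisXop_apply, antidiagShift, smul_eq_mul]
  split_ifs
  · push_cast [Nat.factorial_succ]
    ring
  · simp

end Heisenberg

theorem heisenberg_induced_restriction_general
    (k : Type*) [Field k] (p : ℕ) [CharP k p] :
    ∃ e : (Fin p × Fin p → k) ≃ₗ[k]
        ((Π r : Fin (p - 1), Fin 2 → (Fin ((r : ℕ) + 1) → k)) × (Fin p → k)),
      ∀ v : Fin p × Fin p → k,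
        e (heisXop k p v) =
          (fun (r : Fin (p - 1)) c => (shiftMat k ((r : ℕ) + 1)).mulVecLin ((e v).1 r c),
           (shiftMat k p).mulVecLin (e v).2) := by
  refine ⟨Heisenberg.factorialScaling.trans Heisenberg.toBlocks, fun v => ?_⟩
  rw [LinearEquiv.trans_apply, Heisenberg.factorialScaling_heisXop,
    Heisenberg.toBlocks_antidiagShift]
  rfl

/-- for the 3-dimensional Heisenberg Lie algebra in characteristic `p > 2`,
the induced module `V = A ⊗_{u(⟨x⟩)} k` restricted to `k[x]/(x^p)` decomposes as
`2J₁ ⊕ 2J₂ ⊕ ⋯ ⊕ 2J_{p−1} ⊕ J_p`: there is a `k`-linear equivalence onto two blocks of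
each dimension `1, …, p−1` together with one block of dimension `p`, intertwining the
`x`-action with the Jordan-block shifts. -/
theorem heisenberg_induced_restriction
    (k : Type*) [Field k] (p : ℕ) (hp : p.Prime) (hp2 : 2 < p) [CharP k p] :
    ∃ e : (Fin p × Fin p → k) ≃ₗ[k]
        ((Π r : Fin (p - 1), Fin 2 → (Fin ((r : ℕ) + 1) → k)) × (Fin p → k)),
      ∀ v : Fin p × Fin p → k,
        e (heisXop k p v) =
          (fun (r : Fin (p - 1)) c => (shiftMat k ((r : ℕ) + 1)).mulVecLin ((e v).1 r c),
           (shiftMat k p).mulVecLin (e v).2) :=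
  heisenberg_induced_restriction_general k p
end

section
/- Let k be a field of characteristic p > 2. Let M be the p² × p² block matrix with p × p blocks, whose (i, i+1) block is i·N_p for 1 ≤ i ≤ p−1 (N_p the size-p nilpotent Jordan block) and all other blocks zero, and let F be the p² × p² matrix whose only nonzero block is E (the p × p matrix with a single 1 in the top-right corner) placed in the bottom-left block position. Then (M + F)^n = M^n for all n ≥ 2, rank(M + F) = (p−1)² + 1, and rank((M+F)^n) = (p−n)² for 2 ≤ n ≤ p; consequently the nilpotent matrix M + F has Jordan type 3J_2 ⊕ 2J_3 ⊕ ⋯ ⊕ 2J_{p−1} ⊕ J_p. -/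
/-- The `p² × p²` block matrix `M` whose `(i, i+1)` block is `i·N_p` for `1 ≤ i ≤ p−1`. -/
def heisM (k : Type*) [Field k] (p : ℕ) : Matrix (Fin p × Fin p) (Fin p × Fin p) k :=
  Matrix.of fun x y =>
    if (x.1 : ℕ) + 1 = (y.1 : ℕ) ∧ (x.2 : ℕ) + 1 = (y.2 : ℕ)
    then (((x.1 : ℕ) + 1 : ℕ) : k) else 0

/-- The `p² × p²` matrix `F` whose only nonzero block is `E` (single `1` in the top-right
corner) in the bottom-left block position. -/
def heisF (k : Type*) [Field k] (p : ℕ) : Matrix (Fin p × Fin p) (Fin p × Fin p) k :=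
  Matrix.of fun x y =>
    if (x.1 : ℕ) = p - 1 ∧ (x.2 : ℕ) = 0 ∧ (y.1 : ℕ) = 0 ∧ (y.2 : ℕ) = p - 1
    then 1 else 0

/-!
Acting on vectors indexed by the `p × p` grid, `M = heisM` moves the coordinate at
`(a + 1, b + 1)` to `(a, b)` with weight `a + 1`, and `F = heisF` moves the coordinate at
`(0, p - 1)` to `(p - 1, 0)`. So every diagonal `b - a = d` carries a Jordan chain of `M + F` of
length `p - |d|` once its coordinates are rescaled by ascending factorials, which are nonzero in
characteristic `p` because all their factors are below `p`; the two one-point diagonals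
`|d| = p - 1` are glued by `F` into one chain of length 2. Since `MF = FM = F² = 0`,
`(M + F)^n = M^n` for `n ≥ 2`, and the nonzero columns of `M^n` are nonzero multiples of distinct
standard basis vectors; counting them gives the ranks.
-/

open Matrix Finset

theorem Matrix.rank_eq_card_of_col_eq_single {m n K : Type*} [Field K] [Fintype m] [Fintype n]
    [DecidableEq m] (A : Matrix m n K) (S : Finset n) (φ : n → m) (c : n → K)
    (hφ : Set.InjOn φ S) (hc : ∀ j ∈ S, c j ≠ 0)
    (hS : ∀ j ∈ S, A.col j = Pi.single (φ j) (c j)) (hzero : ∀ j ∉ S, A.col j = 0) :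
    A.rank = #S := by
  have hspan : Submodule.span K (Set.range A.col) =
      Submodule.span K (Set.range fun j : S => A.col j) := by
    refine le_antisymm (Submodule.span_le.2 ?_) (Submodule.span_mono ?_)
    · rintro _ ⟨j, rfl⟩
      by_cases hj : j ∈ S
      · exact Submodule.subset_span ⟨⟨j, hj⟩, rfl⟩
      · simp [hzero j hj]
    · rintro _ ⟨j, rfl⟩
      exact ⟨j, rfl⟩
  have hli : LinearIndependent K fun j : S => A.col j := by
    have := ((Pi.basisFun K m).linearIndependent.comp (fun j : S => φ j)
      (fun i j hij => Subtype.ext (hφ i.2 j.2 hij))).units_smul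
      fun j => Units.mk0 (c j) (hc j j.2)
    convert this using 1
    ext j i
    rw [hS j j.2]
    simp [Pi.single_apply]
  rw [rank_eq_finrank_span_cols, hspan, finrank_span_eq_card hli, Fintype.card_coe]

theorem shiftMat_mulVec {k : Type*} [Semiring k] {n : ℕ} (w : Fin n → k) (i : Fin n) :
    (shiftMat k n *ᵥ w) i = if h : (i : ℕ) + 1 < n then w ⟨i + 1, h⟩ else 0 := by
  simp only [mulVec, dotProduct, shiftMat, of_apply, ite_mul, one_mul, zero_mul]
  split_ifs with h
  · rw [sum_eq_single ⟨i + 1, h⟩ (fun j _ hj => if_neg fun h' => hj (Fin.ext h'.symm))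
      (by simp), if_pos rfl]
  · exact sum_eq_zero fun j _ => if_neg fun (hj : (i : ℕ) + 1 = j) => h (hj ▸ j.isLt)

theorem CharP.cast_ascFactorial_ne_zero {k : Type*} [CommSemiring k] [NoZeroDivisors k]
    [Nontrivial k] (p : ℕ) [CharP k p] {a t : ℕ} (h : a + t < p) :
    ((a + 1).ascFactorial t : k) ≠ 0 := by
  rw [Nat.ascFactorial_eq_prod_range, Nat.cast_prod, prod_ne_zero_iff]
  intro i hi hzero
  rw [CharP.cast_eq_zero_iff k p] at hzero
  have := Nat.le_of_dvd (by omega) hzero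
  rw [mem_range] at hi
  omega

theorem Fin.card_filter_le_val (p n : ℕ) : #{i : Fin p | n ≤ (i : ℕ)} = p - n := by
  have hlt := Fin.card_filter_val_lt (n := p) (m := n)
  have hsum := card_filter_add_card_filter_not (s := univ) fun i : Fin p => (i : ℕ) < n
  simp only [not_lt, card_univ, Fintype.card_fin] at hsum
  omega

theorem Fin.card_filter_le_val_prod (p n : ℕ) :
    #{y : Fin p × Fin p | n ≤ (y.1 : ℕ) ∧ n ≤ (y.2 : ℕ)} = (p - n) ^ 2 := by
  rw [← univ_product_univ,
    filter_product (fun i : Fin p => n ≤ (i : ℕ)) fun i : Fin p => n ≤ (i : ℕ), card_product,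
    Fin.card_filter_le_val, sq]

section Grid

variable (k : Type*) [Semiring k] {p : ℕ}

/-- Read as `0` off the grid, so that shifting indices needs no bound checks. -/
def gridCoord (a b : ℕ) : (Fin p × Fin p → k) →ₗ[k] k :=
  if h : a < p ∧ b < p then LinearMap.proj (⟨a, h.1⟩, ⟨b, h.2⟩) else 0

variable {k}

theorem gridCoord_of_lt {a b : ℕ} (ha : a < p) (hb : b < p) (v : Fin p × Fin p → k) :
    gridCoord k a b v = v (⟨a, ha⟩, ⟨b, hb⟩) := by
  simp [gridCoord, ha, hb]

theorem gridCoord_of_le {a b : ℕ} (h : p ≤ a ∨ p ≤ b) (v : Fin p × Fin p → k) :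
    gridCoord k a b v = 0 := by
  rw [gridCoord, dif_neg (by omega), LinearMap.zero_apply]

theorem gridCoord_val (x : Fin p × Fin p) (v : Fin p × Fin p → k) :
    gridCoord k x.1 x.2 v = v x :=
  gridCoord_of_lt x.1.isLt x.2.isLt v

theorem gridCoord_eq_sum (a b : ℕ) (v : Fin p × Fin p → k) :
    gridCoord k a b v = ∑ y : Fin p × Fin p, if a = y.1 ∧ b = y.2 then v y else 0 := by
  by_cases h : a < p ∧ b < p
  · rw [gridCoord_of_lt h.1 h.2, sum_eq_single (⟨a, h.1⟩, ⟨b, h.2⟩) _ (by simp),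
      if_pos ⟨rfl, rfl⟩]
    rintro y - hy
    exact if_neg fun hab => hy (Prod.ext (Fin.ext hab.1.symm) (Fin.ext hab.2.symm))
  · rw [gridCoord_of_le (by omega)]
    refine (sum_eq_zero fun y _ => if_neg ?_).symm
    rintro ⟨rfl, rfl⟩
    exact h ⟨y.1.isLt, y.2.isLt⟩

theorem gridCoord_single [DecidableEq (Fin p × Fin p)] (a b : ℕ) (y : Fin p × Fin p) (c : k) :
    gridCoord k a b (Pi.single y c) = if a = y.1 ∧ b = y.2 then c else 0 := by
  by_cases h : a < p ∧ b < p
  · rw [gridCoord_of_lt h.1 h.2, Pi.single_apply]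
    simp [Prod.ext_iff, Fin.ext_iff]
  · rw [gridCoord_of_le (by omega), if_neg]
    rintro ⟨rfl, rfl⟩
    exact h ⟨y.1.isLt, y.2.isLt⟩

end Grid

/-- Only meaningful when both coordinates are at least `n`: the subtraction truncates. -/
def diagPred {p : ℕ} (n : ℕ) (y : Fin p × Fin p) : Fin p × Fin p :=
  (⟨y.1 - n, (Nat.sub_le _ _).trans_lt y.1.isLt⟩,
    ⟨y.2 - n, (Nat.sub_le _ _).trans_lt y.2.isLt⟩)

section Heisenberg

variable {k : Type*} [Field k] {p : ℕ}

theorem gridCoord_heisM_mulVec (a b : ℕ) (v : Fin p × Fin p → k) :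
    gridCoord k a b (heisM k p *ᵥ v) = ((a + 1 : ℕ) : k) * gridCoord k (a + 1) (b + 1) v := by
  by_cases h : a < p ∧ b < p
  · rw [gridCoord_of_lt h.1 h.2, gridCoord_eq_sum]
    simp only [mulVec, dotProduct, heisM, of_apply, ite_mul, zero_mul, mul_sum, mul_ite, mul_zero]
  · rw [gridCoord_of_le (by omega), gridCoord_of_le (by omega), mul_zero]

theorem gridCoord_heisF_mulVec (a b : ℕ) (v : Fin p × Fin p → k) :
    gridCoord k a b (heisF k p *ᵥ v) =
      if a = p - 1 ∧ b = 0 then gridCoord k 0 (p - 1) v else 0 := by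
  by_cases h : a < p ∧ b < p
  · rw [gridCoord_of_lt h.1 h.2, gridCoord_eq_sum]
    simp only [mulVec, dotProduct, heisF, of_apply, ite_mul, zero_mul, one_mul]
    split_ifs with hab
    · exact sum_congr rfl fun y _ => if_congr (by simp [hab, eq_comm]) rfl rfl
    · exact sum_eq_zero fun y _ => if_neg fun h' => hab ⟨h'.1, h'.2.1⟩
  · rw [gridCoord_of_le (by omega)]
    split_ifs
    · exact (gridCoord_of_le (by omega) v).symm
    · rfl

theorem gridCoord_heisM_pow_mulVec (n a b : ℕ) (v : Fin p × Fin p → k) :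
    gridCoord k a b (heisM k p ^ n *ᵥ v) =
      ((a + 1).ascFactorial n : k) * gridCoord k (a + n) (b + n) v := by
  induction n generalizing v with
  | zero => simp
  | succ n ih =>
    rw [pow_succ, ← mulVec_mulVec, ih, gridCoord_heisM_mulVec, Nat.ascFactorial_succ]
    push_cast
    ring_nf

theorem heisM_pow_apply (n : ℕ) (x y : Fin p × Fin p) :
    (heisM k p ^ n) x y = if (x.1 : ℕ) + n = y.1 ∧ (x.2 : ℕ) + n = y.2
      then ((x.1 + 1 : ℕ).ascFactorial n : k) else 0 := by
  classical
  calc (heisM k p ^ n) x y = gridCoord k x.1 x.2 (heisM k p ^ n *ᵥ Pi.single y 1) := by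
        simp [gridCoord_val]
    _ = _ := by rw [gridCoord_heisM_pow_mulVec, gridCoord_single, mul_ite, mul_one, mul_zero]

theorem heisM_pow_col (n : ℕ) (y : Fin p × Fin p) :
    (heisM k p ^ n).col y = if n ≤ (y.1 : ℕ) ∧ n ≤ (y.2 : ℕ)
      then Pi.single (diagPred n y) ((y.1 - n + 1 : ℕ).ascFactorial n : k) else 0 := by
  ext x
  rw [col_apply, heisM_pow_apply]
  split_ifs with hx hy hy
  · rw [Pi.single_apply, if_pos (Prod.ext (Fin.ext (by simp [diagPred]; omega))
      (Fin.ext (by simp [diagPred]; omega)))]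
    congr 3
    omega
  · omega
  · rw [Pi.single_apply, if_neg]
    simp only [diagPred, Prod.ext_iff, Fin.ext_iff]
    omega
  · rfl

theorem heisM_mul_heisF : heisM k p * heisF k p = 0 := by
  ext x y
  refine sum_eq_zero fun z _ => ?_
  simp only [heisM, heisF, of_apply]
  split_ifs <;> first | omega | simp

theorem heisF_mul_heisM : heisF k p * heisM k p = 0 := by
  ext x y
  refine sum_eq_zero fun z _ => ?_
  have := y.2.isLt
  simp only [heisM, heisF, of_apply]
  split_ifs <;> first | omega | simp

theorem heisF_mul_heisF (hp : 1 < p) : heisF k p * heisF k p = 0 := by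
  ext x y
  refine sum_eq_zero fun z _ => ?_
  simp only [heisF, of_apply]
  split_ifs <;> first | omega | simp

theorem heisM_add_heisF_pow (hp : 1 < p) {n : ℕ} (hn : 2 ≤ n) :
    (heisM k p + heisF k p) ^ n = heisM k p ^ n := by
  induction n, hn using Nat.le_induction with
  | base => simp [sq, add_mul, mul_add, heisM_mul_heisF, heisF_mul_heisM, heisF_mul_heisF hp]
  | succ n hn ih =>
    have hMF : heisM k p ^ n * heisF k p = 0 := by
      rw [← Nat.sub_add_cancel (by omega : 1 ≤ n), pow_succ, mul_assoc, heisM_mul_heisF,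
        mul_zero]
    rw [pow_succ, ih, mul_add, hMF, add_zero, pow_succ]

theorem rank_heisM_pow [CharP k p] (n : ℕ) : (heisM k p ^ n).rank = (p - n) ^ 2 := by
  rw [← Fin.card_filter_le_val_prod]
  refine rank_eq_card_of_col_eq_single _ _ (diagPred n)
    (fun y => ((y.1 - n + 1 : ℕ).ascFactorial n : k)) ?_ ?_ ?_ ?_
  · intro y hy y' hy' h
    simp only [coe_filter, mem_univ, true_and, Set.mem_ofPred_eq] at hy hy'
    simp only [diagPred, Prod.ext_iff, Fin.ext_iff] at h ⊢
    omega
  · intro y hy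
    simp only [mem_filter, mem_univ, true_and] at hy
    exact CharP.cast_ascFactorial_ne_zero p (by omega)
  · intro y hy
    rw [heisM_pow_col, if_pos (mem_filter.1 hy).2]
  · intro y hy
    rw [heisM_pow_col, if_neg fun h => hy (mem_filter.2 ⟨mem_univ _, h⟩)]

theorem heisM_add_heisF_col {i₀ j₀ : Fin p × Fin p}
    (hi₀ : (i₀.1 : ℕ) = p - 1 ∧ (i₀.2 : ℕ) = 0) (hj₀ : (j₀.1 : ℕ) = 0 ∧ (j₀.2 : ℕ) = p - 1)
    (y : Fin p × Fin p) :
    (heisM k p + heisF k p).col y = if y = j₀ then Pi.single i₀ 1 else (heisM k p).col y := by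
  ext x
  rw [col_apply, Matrix.add_apply]
  by_cases hy : y = j₀
  · subst hy
    simp [heisM, heisF, Pi.single_apply, Prod.ext_iff, Fin.ext_iff, hi₀, hj₀]
  · rw [if_neg hy, col_apply, heisF, of_apply, if_neg, add_zero]
    rintro ⟨-, -, h₁, h₂⟩
    exact hy (Prod.ext (Fin.ext (h₁.trans hj₀.1.symm)) (Fin.ext (h₂.trans hj₀.2.symm)))

theorem rank_heisM_add_heisF [CharP k p] (hp : 1 < p) :
    (heisM k p + heisF k p).rank = (p - 1) ^ 2 + 1 := by
  obtain ⟨i₀, hi₀⟩ : ∃ i : Fin p × Fin p, (i.1 : ℕ) = p - 1 ∧ (i.2 : ℕ) = 0 :=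
    ⟨(⟨p - 1, by omega⟩, ⟨0, by omega⟩), rfl, rfl⟩
  obtain ⟨j₀, hj₀⟩ : ∃ j : Fin p × Fin p, (j.1 : ℕ) = 0 ∧ (j.2 : ℕ) = p - 1 :=
    ⟨(⟨0, by omega⟩, ⟨p - 1, by omega⟩), rfl, rfl⟩
  have eq_j₀ (y : Fin p × Fin p) : y = j₀ ↔ (y.1 : ℕ) = 0 ∧ (y.2 : ℕ) = p - 1 := by
    simp only [Prod.ext_iff, Fin.ext_iff, hj₀]
  set S : Finset (Fin p × Fin p) := {y | 1 ≤ (y.1 : ℕ) ∧ 1 ≤ (y.2 : ℕ)}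
  have hj₀S : j₀ ∉ S := by simp [S, hj₀]
  have hcol (y : Fin p × Fin p) : (heisM k p + heisF k p).col y = if y = j₀ then Pi.single i₀ 1
      else if 1 ≤ (y.1 : ℕ) ∧ 1 ≤ (y.2 : ℕ)
        then Pi.single (diagPred 1 y) ((y.1 - 1 + 1 : ℕ).ascFactorial 1 : k) else 0 := by
    rw [heisM_add_heisF_col hi₀ hj₀, ← heisM_pow_col, pow_one]
  rw [← Fin.card_filter_le_val_prod p 1, ← card_insert_of_notMem hj₀S]
  refine rank_eq_card_of_col_eq_single _ _ (fun y => if y = j₀ then i₀ else diagPred 1 y)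
    (fun y => if y = j₀ then 1 else ((y.1 - 1 + 1 : ℕ).ascFactorial 1 : k)) ?_ ?_ ?_ ?_
  · intro y hy y' hy' h
    simp only [coe_insert, coe_filter, S, Set.mem_insert_iff, mem_univ, true_and,
      Set.mem_ofPred_eq, eq_j₀] at hy hy' h
    split_ifs at h <;> simp only [diagPred, Prod.ext_iff, Fin.ext_iff] at h ⊢ <;> omega
  · intro y hy
    simp only [mem_insert, S, mem_filter, mem_univ, true_and, eq_j₀] at hy ⊢
    split_ifs
    · exact one_ne_zero
    · exact CharP.cast_ascFactorial_ne_zero p (by omega)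
  · intro y hy
    rcases mem_insert.1 hy with rfl | hy
    · rw [hcol, if_pos rfl, if_pos rfl, if_pos rfl]
    · have hy₀ : y ≠ j₀ := fun h => hj₀S (h ▸ hy)
      rw [hcol, if_neg hy₀, if_pos (mem_filter.1 hy).2, if_neg hy₀, if_neg hy₀]
  · intro y hy
    rw [mem_insert, not_or] at hy
    rw [hcol, if_neg hy.1, if_neg fun h => hy.2 (mem_filter.2 ⟨mem_univ _, h⟩)]

end Heisenberg

section Jordan

variable (k : Type*) [Field k] {p : ℕ}

/-- The `t`-th coordinate along the diagonal starting at `(a, b)`, rescaled by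
`(a + 1)(a + 2)⋯(a + t)` so that `heisM + heisF` acts along the diagonal as the plain shift. -/
def chainCoord (a b t : ℕ) : (Fin p × Fin p → k) →ₗ[k] k :=
  ((a + 1).ascFactorial t : k) • gridCoord k (a + t) (b + t)

def chainMap (a b n : ℕ) : (Fin p × Fin p → k) →ₗ[k] Fin n → k :=
  LinearMap.pi fun i => chainCoord k a b i

variable (p) in
/-- The two one-point diagonals, which `heisF` joins into a chain of length 2. -/
def cornerMap : (Fin p × Fin p → k) →ₗ[k] Fin 2 → k :=
  LinearMap.pi ![gridCoord k (p - 1) 0, gridCoord k 0 (p - 1)]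

variable (p) in
abbrev JordanSpace : Type _ :=
  (Fin 3 → Fin 2 → k) × (Π r : Fin (p - 3), Fin 2 → Fin ((r : ℕ) + 3) → k) × (Fin p → k)

variable (p) in
/-- The diagonals `b - a = ±d` carry chains of length `p - d`: those with `d = p - 2` go to the
first factor together with the corner chain, those with `0 < d ≤ p - 3` to the second, and the
main diagonal to the third. -/
def jordanMap : (Fin p × Fin p → k) →ₗ[k] JordanSpace k p :=
  (LinearMap.pi ![chainMap k (p - 2) 0 2, chainMap k 0 (p - 2) 2, cornerMap k p]).prod
    ((LinearMap.pi fun r : Fin (p - 3) =>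
        (LinearMap.pi ![chainMap k (p - (r + 3)) 0 (r + 3), chainMap k 0 (p - (r + 3)) (r + 3)] :
          (Fin p × Fin p → k) →ₗ[k] Fin 2 → Fin (r + 3) → k)).prod
      (chainMap k 0 0 p))

variable {k}

theorem chainCoord_of_le {a b t : ℕ} (h : p ≤ a + t ∨ p ≤ b + t) (v : Fin p × Fin p → k) :
    chainCoord k a b t v = 0 := by
  rw [chainCoord, LinearMap.smul_apply, gridCoord_of_le h, smul_zero]

theorem chainCoord_eq_zero_iff [CharP k p] {a b t : ℕ} (h : a + t < p) (v : Fin p × Fin p → k) :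
    chainCoord k a b t v = 0 ↔ gridCoord k (a + t) (b + t) v = 0 := by
  rw [chainCoord, LinearMap.smul_apply, smul_eq_zero,
    or_iff_right (CharP.cast_ascFactorial_ne_zero p h)]

theorem chainCoord_heisM_add_heisF_mulVec {a b t : ℕ} (h : ¬(a + t = p - 1 ∧ b + t = 0))
    (v : Fin p × Fin p → k) :
    chainCoord k a b t ((heisM k p + heisF k p) *ᵥ v) = chainCoord k a b (t + 1) v := by
  simp only [chainCoord, LinearMap.smul_apply, add_mulVec, map_add, gridCoord_heisM_mulVec,
    gridCoord_heisF_mulVec, if_neg h, Nat.ascFactorial_succ, smul_eq_mul]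
  push_cast
  ring_nf

theorem chainMap_heisM_add_heisF_mulVec {a b n : ℕ} (hend : p ≤ a + n ∨ p ≤ b + n)
    (hcorner : ¬(a = p - 1 ∧ b = 0)) (v : Fin p × Fin p → k) :
    chainMap k a b n ((heisM k p + heisF k p) *ᵥ v) = shiftMat k n *ᵥ chainMap k a b n v := by
  ext i
  rw [shiftMat_mulVec]
  simp only [chainMap, LinearMap.pi_apply]
  rw [chainCoord_heisM_add_heisF_mulVec (by omega)]
  split_ifs
  · rfl
  · exact chainCoord_of_le (by omega) v

theorem cornerMap_heisM_add_heisF_mulVec (hp : 1 < p) (v : Fin p × Fin p → k) :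
    cornerMap k p ((heisM k p + heisF k p) *ᵥ v) = shiftMat k 2 *ᵥ cornerMap k p v := by
  ext i
  fin_cases i <;>
    simp [cornerMap, shiftMat_mulVec, add_mulVec, gridCoord_heisM_mulVec, gridCoord_heisF_mulVec,
      gridCoord_of_le, Nat.sub_add_cancel hp.le]
  omega

theorem jordanMap_heisM_add_heisF_mulVec (hp : 2 < p) (v : Fin p × Fin p → k) :
    jordanMap k p ((heisM k p + heisF k p) *ᵥ v) =
      (fun b => shiftMat k 2 *ᵥ (jordanMap k p v).1 b,
       fun (r : Fin (p - 3)) c => shiftMat k ((r : ℕ) + 3) *ᵥ (jordanMap k p v).2.1 r c,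
       shiftMat k p *ᵥ (jordanMap k p v).2.2) := by
  refine Prod.ext (funext fun b => ?_) (Prod.ext (funext fun r => funext fun c => ?_) ?_) <;>
    simp only [jordanMap, LinearMap.prod_apply, Function.prod, LinearMap.pi_apply]
  · fin_cases b
    · exact chainMap_heisM_add_heisF_mulVec (by omega) (by omega) v
    · exact chainMap_heisM_add_heisF_mulVec (by omega) (by omega) v
    · exact cornerMap_heisM_add_heisF_mulVec (by omega) v
  · have := r.isLt
    fin_cases c
    · exact chainMap_heisM_add_heisF_mulVec (by omega) (by omega) v
    · exact chainMap_heisM_add_heisF_mulVec (by omega) (by omega) v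
  · exact chainMap_heisM_add_heisF_mulVec (by omega) (by omega) v

theorem chainCoord_eq_zero_of_jordanMap_eq_zero {v : Fin p × Fin p → k}
    (hv : jordanMap k p v = 0) {d t : ℕ} (hd : d + 1 < p) (ht : d + t < p) :
    chainCoord k d 0 t v = 0 ∧ chainCoord k 0 d t v = 0 := by
  rcases Nat.eq_zero_or_pos d with rfl | hd₀
  · have h : chainCoord k 0 0 t v = 0 := congrFun (congrArg (·.2.2) hv) ⟨t, by omega⟩
    exact ⟨h, h⟩
  rcases eq_or_ne d (p - 2) with rfl | hd₂
  · exact ⟨congrFun (congrFun (congrArg Prod.fst hv) 0) ⟨t, by omega⟩,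
      congrFun (congrFun (congrArg Prod.fst hv) 1) ⟨t, by omega⟩⟩
  · have hr : p - (p - d - 3 + 3) = d := by omega
    have h := congrFun (congrArg (·.2.1) hv) ⟨p - d - 3, by omega⟩
    have htr : t < p - d - 3 + 3 := by omega
    have h₁ : chainCoord k (p - (p - d - 3 + 3)) 0 t v = 0 := congrFun (congrFun h 0) ⟨t, htr⟩
    have h₂ : chainCoord k 0 (p - (p - d - 3 + 3)) t v = 0 := congrFun (congrFun h 1) ⟨t, htr⟩
    rw [hr] at h₁ h₂
    exact ⟨h₁, h₂⟩

theorem jordanMap_injective [CharP k p] (hp : 2 < p) : Function.Injective (jordanMap k p) := by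
  rw [← LinearMap.ker_eq_bot, LinearMap.ker_eq_bot']
  intro v hv
  have hdiag (d t : ℕ) (ht : d + t < p) :
      gridCoord k (d + t) t v = 0 ∧ gridCoord k t (d + t) v = 0 := by
    by_cases hd : d + 1 < p
    · obtain ⟨h₁, h₂⟩ := chainCoord_eq_zero_of_jordanMap_eq_zero hv hd ht
      rw [chainCoord_eq_zero_iff ht, zero_add] at h₁
      rw [chainCoord_eq_zero_iff (by omega), zero_add] at h₂
      exact ⟨h₁, h₂⟩
    · obtain ⟨rfl, rfl⟩ : d = p - 1 ∧ t = 0 := by omega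
      have hcorner : cornerMap k p v = 0 := congrFun (congrArg Prod.fst hv) 2
      exact ⟨congrFun hcorner 0, congrFun hcorner 1⟩
  ext ⟨a, b⟩
  rw [Pi.zero_apply, ← gridCoord_val (a, b) v]
  rcases le_total b a with h | h
  · simpa [Nat.sub_add_cancel h] using (hdiag (a - b) b (by omega)).1
  · simpa [Nat.sub_add_cancel h] using (hdiag (b - a) a (by omega)).2

theorem finrank_jordanSpace (hp : 3 ≤ p) :
    Module.finrank k (JordanSpace k p) = Module.finrank k (Fin p × Fin p → k) := by
  obtain ⟨q, rfl⟩ := Nat.exists_eq_add_of_le' hp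
  have hsum (n : ℕ) : ∑ i ∈ range n, 2 * (i + 3) = n * (n + 5) := by
    induction n with
    | zero => rfl
    | succ n ih => rw [sum_range_succ, ih]; ring
  simp [Module.finrank_pi_fintype, Fin.sum_univ_eq_sum_range (fun i => 2 * (i + 3)), hsum]
  ring

end Jordan

theorem heisenberg_twisted_matrix_ranks_general
    (k : Type*) [Field k] (p : ℕ) (hp2 : 2 < p) [CharP k p] :
    (∀ n : ℕ, 2 ≤ n → (heisM k p + heisF k p) ^ n = (heisM k p) ^ n) ∧
    (heisM k p + heisF k p).rank = (p - 1) ^ 2 + 1 ∧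
    (∀ n : ℕ, 2 ≤ n → n ≤ p → ((heisM k p + heisF k p) ^ n).rank = (p - n) ^ 2) ∧
    (∃ e : (Fin p × Fin p → k) ≃ₗ[k]
        ((Fin 3 → (Fin 2 → k)) ×
          (Π r : Fin (p - 3), Fin 2 → (Fin ((r : ℕ) + 3) → k)) × (Fin p → k)),
      ∀ v : Fin p × Fin p → k,
        e ((heisM k p + heisF k p).mulVecLin v) =
          (fun b => (shiftMat k 2).mulVecLin ((e v).1 b),
           fun (r : Fin (p - 3)) c => (shiftMat k ((r : ℕ) + 3)).mulVecLin ((e v).2.1 r c),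
           (shiftMat k p).mulVecLin (e v).2.2)) := by
  refine ⟨fun n hn => heisM_add_heisF_pow (by omega) hn, rank_heisM_add_heisF (by omega),
    fun n hn _ => by rw [heisM_add_heisF_pow (by omega) hn, rank_heisM_pow], ?_⟩
  refine ⟨LinearMap.linearEquivOfInjective _ (jordanMap_injective hp2)
    (finrank_jordanSpace hp2).symm, fun v => ?_⟩
  simp only [LinearMap.linearEquivOfInjective_apply, mulVecLin_apply]
  exact jordanMap_heisM_add_heisF_mulVec hp2 v

/-- `(M + F)^n = M^n` for `n ≥ 2`, `rank(M + F) = (p−1)² + 1`,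
`rank((M+F)^n) = (p−n)²` for `2 ≤ n ≤ p`; consequently the nilpotent matrix `M + F` has
Jordan type `3J₂ ⊕ 2J₃ ⊕ ⋯ ⊕ 2J_{p−1} ⊕ J_p`. -/
theorem heisenberg_twisted_matrix_ranks
    (k : Type*) [Field k] (p : ℕ) (hp : p.Prime) (hp2 : 2 < p) [CharP k p] :
    (∀ n : ℕ, 2 ≤ n → (heisM k p + heisF k p) ^ n = (heisM k p) ^ n) ∧
    (heisM k p + heisF k p).rank = (p - 1) ^ 2 + 1 ∧
    (∀ n : ℕ, 2 ≤ n → n ≤ p → ((heisM k p + heisF k p) ^ n).rank = (p - n) ^ 2) ∧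
    (∃ e : (Fin p × Fin p → k) ≃ₗ[k]
        ((Fin 3 → (Fin 2 → k)) ×
          (Π r : Fin (p - 3), Fin 2 → (Fin ((r : ℕ) + 3) → k)) × (Fin p → k)),
      ∀ v : Fin p × Fin p → k,
        e ((heisM k p + heisF k p).mulVecLin v) =
          (fun b => (shiftMat k 2).mulVecLin ((e v).1 b),
           fun (r : Fin (p - 3)) c => (shiftMat k ((r : ℕ) + 3)).mulVecLin ((e v).2.1 r c),
           (shiftMat k p).mulVecLin (e v).2.2)) :=
  heisenberg_twisted_matrix_ranks_general k p hp2
end
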